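/- arXiv:1912.11190 — 3 statements merged into one kernel-verified Lean document; each statement's English description precedes it below -/
import Mathlib

section
/- For all real numbers a, b ≥ 0 and every real p ≥ 1, one has (a - b)(a^(2p-1) - b^(2p-1)) ≥ ((2p-1)/p²)·(a^p - b^p)². -/
/-!
Both sides are integrals over `[b, a]`: `(a^p - b^p) / p = ∫ x^(p-1)` and
`(a^(2p-1) - b^(2p-1)) / (2p-1) = ∫ x^(2p-2)`, so the inequality is the Cauchy–Schwarz
inequality `(∫ f)² ≤ (a - b) ∫ f²` for `f x = x^(p-1)`, which in turn is Jensen's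
inequality for `t ↦ t²`.
-/

open MeasureTheory Set

theorem sq_integral_le_measureReal_univ_mul_integral_sq {α : Type*} [MeasurableSpace α]
    {μ : Measure α} [IsFiniteMeasure μ] {f : α → ℝ} (hf : Integrable f μ)
    (hf2 : Integrable (fun x => f x ^ 2) μ) :
    (∫ x, f x ∂μ) ^ 2 ≤ μ.real univ * ∫ x, f x ^ 2 ∂μ := by
  rcases eq_zero_or_neZero μ with rfl | hμ
  · simp
  have hL : 0 < μ.real univ := by
    simpa [measureReal_def, ENNReal.toReal_pos_iff] using NeZero.ne μ
  have jensen : (⨍ x, f x ∂μ) ^ 2 ≤ ⨍ x, f x ^ 2 ∂μ :=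
    (even_two.convexOn_pow (𝕜 := ℝ)).map_average_le (continuous_pow 2).continuousOn
      isClosed_univ (.of_forall fun _ => mem_univ _) hf hf2
  rw [average_eq, average_eq, smul_eq_mul, smul_eq_mul, mul_pow, inv_pow] at jensen
  have := mul_le_mul_of_nonneg_left jensen (sq_nonneg (μ.real univ))
  field_simp at this
  nlinarith

theorem intervalIntegral.sq_integral_le_mul_integral_sq {f : ℝ → ℝ} {a b : ℝ}
    (hf : IntervalIntegrable f volume a b)
    (hf2 : IntervalIntegrable (fun x => f x ^ 2) volume a b) :
    (∫ x in a..b, f x) ^ 2 ≤ (b - a) * ∫ x in a..b, f x ^ 2 := by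
  wlog hab : a ≤ b generalizing a b
  · have := this hf.symm hf2.symm (le_of_not_ge hab)
    rw [intervalIntegral.integral_symm a, intervalIntegral.integral_symm a] at this
    linarith
  have : IsFiniteMeasure (volume.restrict (Ioc a b)) := by
    rw [isFiniteMeasure_restrict]
    exact measure_Ioc_lt_top.ne
  simpa [intervalIntegral.integral_of_le hab, hab] using
    sq_integral_le_measureReal_univ_mul_integral_sq hf.1 hf2.1

/-- For `a, b ≥ 0` and real `p ≥ 1`:
`(a-b)(a^(2p-1) - b^(2p-1)) ≥ ((2p-1)/p²)(a^p - b^p)²`. -/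
theorem stmt_4 (a b p : ℝ) (ha : 0 ≤ a) (hb : 0 ≤ b) (hp : 1 ≤ p) :
    ((2 * p - 1) / p ^ 2) * (a ^ p - b ^ p) ^ 2 ≤
      (a - b) * (a ^ (2 * p - 1) - b ^ (2 * p - 1)) := by
  have h2p : 0 < 2 * p - 1 := by linarith
  have hint : ∫ x in b..a, x ^ (p - 1) = (a ^ p - b ^ p) / p := by
    rw [integral_rpow (.inl (by linarith)), sub_add_cancel]
  have hint_sq :
      ∫ x in b..a, (x ^ (p - 1)) ^ 2 = (a ^ (2 * p - 1) - b ^ (2 * p - 1)) / (2 * p - 1) := by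
    have hsq : EqOn (fun x : ℝ => (x ^ (p - 1)) ^ 2) (fun x => x ^ (2 * p - 2)) (uIcc b a) :=
      fun x hx => by
        dsimp only
        rw [← Real.rpow_mul_natCast (le_trans (le_min hb ha) hx.1)]
        ring_nf
    rw [intervalIntegral.integral_congr hsq, integral_rpow (.inl (by linarith))]
    ring_nf
  have hcont : Continuous fun x : ℝ => x ^ (p - 1) := Real.continuous_rpow_const (by linarith)
  have hcs := intervalIntegral.sq_integral_le_mul_integral_sq
    (hcont.intervalIntegrable b a) ((hcont.pow 2).intervalIntegrable b a)
  rw [hint, hint_sq] at hcs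
  calc (2 * p - 1) / p ^ 2 * (a ^ p - b ^ p) ^ 2
      = (2 * p - 1) * ((a ^ p - b ^ p) / p) ^ 2 := by ring
    _ ≤ (2 * p - 1) * ((a - b) * ((a ^ (2 * p - 1) - b ^ (2 * p - 1)) / (2 * p - 1))) := by
      gcongr
    _ = (a - b) * (a ^ (2 * p - 1) - b ^ (2 * p - 1)) := by field_simp
end

section
/- For all real numbers a, b ≥ 0 and every real p ≥ 1, one has (a - b)(a^(2p-1) - b^(2p-1)) ≥ (1/p)·(a^p - b^p)². -/
/-!
Assume `b ≤ a`. Convexity of `x ↦ x ^ p` bounds the secant slope by the derivative at `a`, so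
`a ^ p - b ^ p ≤ p a ^ (p - 1) (a - b)`; and `b ^ (2p - 1) = b ^ (p - 1) b ^ p ≤ a ^ (p - 1) b ^ p`
gives `a ^ (p - 1) (a ^ p - b ^ p) ≤ a ^ (2p - 1) - b ^ (2p - 1)`. Multiplying the first bound
by `(a ^ p - b ^ p) / p ≥ 0` and then using the second yields the inequality.
-/

namespace Real

lemma rpow_sub_rpow_le_mul_sub {a b p : ℝ} (hb : 0 ≤ b) (hba : b ≤ a) (hp : 1 ≤ p) :
    a ^ p - b ^ p ≤ p * a ^ (p - 1) * (a - b) := by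
  rcases hba.eq_or_lt with rfl | hlt
  · simp
  have hslope : slope (fun x : ℝ ↦ x ^ p) b a ≤ p * a ^ (p - 1) :=
    (convexOn_rpow hp).slope_le_of_hasDerivAt (Set.mem_Ici.2 hb)
      (Set.mem_Ici.2 (hb.trans hlt.le)) hlt (hasDerivAt_rpow_const (Or.inr hp))
  rw [slope_def_field, div_le_iff₀ (sub_pos.2 hlt)] at hslope
  exact hslope

lemma rpow_mul_rpow_sub_rpow_le {a b q r : ℝ} (hb : 0 ≤ b) (hba : b ≤ a) (hq : 0 ≤ q)
    (hr : 0 ≤ r) : a ^ q * (a ^ r - b ^ r) ≤ a ^ (q + r) - b ^ (q + r) := by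
  have ha : 0 ≤ a := hb.trans hba
  have hbq : b ^ q ≤ a ^ q := rpow_le_rpow hb hba hq
  rw [rpow_add_of_nonneg ha hq hr, rpow_add_of_nonneg hb hq hr, mul_sub]
  gcongr

end Real

/-- For `a, b ≥ 0` and real `p ≥ 1`:
`(a-b)(a^(2p-1) - b^(2p-1)) ≥ (1/p)(a^p - b^p)²`. -/
theorem stmt_5 (a b p : ℝ) (ha : 0 ≤ a) (hb : 0 ≤ b) (hp : 1 ≤ p) :
    (1 / p) * (a ^ p - b ^ p) ^ 2 ≤
      (a - b) * (a ^ (2 * p - 1) - b ^ (2 * p - 1)) := by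
  wlog hba : b ≤ a generalizing a b
  · have := this b a hb ha (le_of_not_ge hba)
    linarith
  have hp0 : 0 < p := by linarith
  have hdiff : 0 ≤ a ^ p - b ^ p := sub_nonneg.2 (Real.rpow_le_rpow hb hba hp0.le)
  calc (1 / p) * (a ^ p - b ^ p) ^ 2
      = (1 / p) * (a ^ p - b ^ p) * (a ^ p - b ^ p) := by ring
    _ ≤ (1 / p) * (p * a ^ (p - 1) * (a - b)) * (a ^ p - b ^ p) := by
      gcongr
      exact Real.rpow_sub_rpow_le_mul_sub hb hba hp
    _ = (a - b) * (a ^ (p - 1) * (a ^ p - b ^ p)) := by field_simp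
    _ ≤ (a - b) * (a ^ (p - 1 + p) - b ^ (p - 1 + p)) := by
      gcongr
      exact Real.rpow_mul_rpow_sub_rpow_le hb hba (by linarith) hp0.le
    _ = (a - b) * (a ^ (2 * p - 1) - b ^ (2 * p - 1)) := by ring_nf
end

section
/- Let w : (0,∞) → (0,∞) be non-decreasing and let u : [0,∞) → (0,∞) be continuously differentiable, satisfying u'(t) ≤ -b·t^(p-2)·u(t)^(1+θ)/w(t)^θ + K·u(t) for all t ≥ 0, where b > 0, p > 1, θ > 0, K > 0. Then for every a ≥ 1 and every t > 0, u(t) ≤ (2p^a/(θb))^(1/θ) · t^(-(p-1)/θ) · e^(K·p^(-a)·t) · w(t). -/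
open Set

/-! With `v(s) = e^{θKs} u(s)^{-θ}` the differential inequality reads
`v'(s) ≥ θ b e^{θKs} s^{p-2} / w(s)^θ`, which on a window `[s₀, t]` is at least
`θ b e^{θKs₀} s^{p-2} / w(t)^θ` because `w` is non-decreasing. Comparing with the primitive of
the right-hand side and discarding `v(s₀) > 0` gives
`v(t) ≥ θ b e^{θKs₀} (t^{p-1} - s₀^{p-1}) / ((p-1) w(t)^θ)`. For the window
`s₀ = (1 - p^{-a}) t` one has `t^{p-1} - s₀^{p-1} ≥ (p-1) p^{-a} t^{p-1} / 2`, and solving for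
`u(t)` gives the bound; `e^{θK(t - s₀)} = e^{θK p^{-a} t}` is the price of the window. -/

lemma one_sub_rpow_le_one_sub_half_mul {q x : ℝ} (hq : 0 ≤ q) (hx₀ : 0 ≤ x) (hx₁ : x < 1)
    (hqx : q * x ≤ 1) : (1 - x) ^ q ≤ 1 - q * x / 2 := by
  have hlog : Real.log (1 - x) * q ≤ -(q * x) := by
    nlinarith [Real.log_le_sub_one_of_pos (x := 1 - x) (by linarith)]
  calc (1 - x) ^ q = Real.exp (Real.log (1 - x) * q) := Real.rpow_def_of_pos (by linarith) _
    _ ≤ Real.exp (-(q * x)) := Real.exp_le_exp.2 hlog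
    _ ≤ (1 + q * x)⁻¹ := by
      rw [Real.exp_neg]
      exact inv_anti₀ (by positivity) (by linarith [Real.add_one_le_exp (q * x)])
    _ ≤ 1 - q * x / 2 := by
      rw [inv_le_iff_one_le_mul₀ (by positivity)]
      nlinarith [mul_nonneg hq hx₀]

lemma sub_le_sub_of_hasDerivAt_le {f g f' g' : ℝ → ℝ} {a b : ℝ} (hab : a ≤ b)
    (hf : ∀ x ∈ Icc a b, HasDerivAt f (f' x) x) (hg : ∀ x ∈ Icc a b, HasDerivAt g (g' x) x)
    (hle : ∀ x ∈ Ioo a b, g' x ≤ f' x) : g b - g a ≤ f b - f a := by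
  have hmono : MonotoneOn (fun x => f x - g x) (Icc a b) := by
    refine monotoneOn_of_hasDerivWithinAt_nonneg (convex_Icc a b)
      (fun x hx => ((hf x hx).sub (hg x hx)).continuousAt.continuousWithinAt)
      (fun x hx => ?_) (fun x hx => ?_) (f' := fun x => f' x - g' x)
    · rw [interior_Icc] at hx
      exact ((hf x (Ioo_subset_Icc_self hx)).sub (hg x (Ioo_subset_Icc_self hx))).hasDerivWithinAt
    · rw [interior_Icc] at hx
      exact sub_nonneg.2 (hle x hx)
  linarith [hmono (left_mem_Icc.2 hab) (right_mem_Icc.2 hab) hab]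

lemma HasDerivAt.exp_mul_rpow_neg {u : ℝ → ℝ} {u' s c θ : ℝ} (hu : HasDerivAt u u' s)
    (hpos : 0 < u s) :
    HasDerivAt (fun y => Real.exp (c * y) * u y ^ (-θ))
      (Real.exp (c * s) * u s ^ (-θ - 1) * (c * u s - θ * u')) s := by
  have hexp : HasDerivAt (fun y => Real.exp (c * y)) (Real.exp (c * s) * c) s := by
    simpa using ((hasDerivAt_id s).const_mul c).exp
  refine (hexp.mul (hu.rpow_const (p := -θ) (Or.inl hpos.ne'))).congr_deriv ?_
  rw [show u s ^ (-θ) = u s ^ (-θ - 1) * u s by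
    rw [← Real.rpow_add_one hpos.ne']; ring_nf]
  ring

section Davies

variable {w u u' : ℝ → ℝ} {b p θ K s₀ t : ℝ}

lemma davies_deriv_lower_bound (hb : 0 ≤ b) (hθ : 0 ≤ θ) (hK : 0 ≤ K) {s d : ℝ}
    (hs₀s : s₀ ≤ s) (hs : 0 < s) (hws : 0 < w s) (hwst : w s ≤ w t) (hus : 0 < u s)
    (hode : d ≤ -b * s ^ (p - 2) * u s ^ (1 + θ) / w s ^ θ + K * u s) :
    θ * b * Real.exp (θ * K * s₀) / w t ^ θ * s ^ (p - 2) ≤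
      Real.exp (θ * K * s) * u s ^ (-θ - 1) * (θ * K * u s - θ * d) := by
  have hwt : 0 < w t := hws.trans_le hwst
  have hgrowth : b * s ^ (p - 2) * u s ^ (1 + θ) / w t ^ θ ≤ K * u s - d := by
    have hw : b * s ^ (p - 2) * u s ^ (1 + θ) / w t ^ θ ≤
        b * s ^ (p - 2) * u s ^ (1 + θ) / w s ^ θ :=
      div_le_div_of_nonneg_left (by positivity) (by positivity)
        (Real.rpow_le_rpow hws.le hwst hθ)
    have hneg : -b * s ^ (p - 2) * u s ^ (1 + θ) / w s ^ θ
        = -(b * s ^ (p - 2) * u s ^ (1 + θ) / w s ^ θ) := by ring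
    linarith
  have hcancel : u s ^ (-θ - 1) * u s ^ (1 + θ) = 1 := by
    rw [← Real.rpow_add hus, show -θ - 1 + (1 + θ) = 0 by ring, Real.rpow_zero]
  calc θ * b * Real.exp (θ * K * s₀) / w t ^ θ * s ^ (p - 2)
      ≤ θ * b * Real.exp (θ * K * s) / w t ^ θ * s ^ (p - 2) := by gcongr
    _ = θ * Real.exp (θ * K * s) * u s ^ (-θ - 1) *
          (b * s ^ (p - 2) * u s ^ (1 + θ) / w t ^ θ) := by
        linear_combination
          (-(θ * b * Real.exp (θ * K * s) / w t ^ θ * s ^ (p - 2))) * hcancel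
    _ ≤ θ * Real.exp (θ * K * s) * u s ^ (-θ - 1) * (K * u s - d) := by gcongr
    _ = Real.exp (θ * K * s) * u s ^ (-θ - 1) * (θ * K * u s - θ * d) := by ring

lemma davies_window_increment (hb : 0 ≤ b) (hp : p ≠ 1) (hθ : 0 ≤ θ) (hK : 0 ≤ K)
    (hs₀ : 0 < s₀) (hs₀t : s₀ ≤ t)
    (hw_pos : ∀ s ∈ Icc s₀ t, 0 < w s) (hw_mono : ∀ s ∈ Icc s₀ t, w s ≤ w t)
    (hu_pos : ∀ s ∈ Icc s₀ t, 0 < u s) (hu' : ∀ s ∈ Icc s₀ t, HasDerivAt u (u' s) s)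
    (hode : ∀ s ∈ Icc s₀ t, u' s ≤ -b * s ^ (p - 2) * u s ^ (1 + θ) / w s ^ θ + K * u s) :
    θ * b * Real.exp (θ * K * s₀) * (t ^ (p - 1) - s₀ ^ (p - 1)) / ((p - 1) * w t ^ θ) ≤
      Real.exp (θ * K * t) * u t ^ (-θ) - Real.exp (θ * K * s₀) * u s₀ ^ (-θ) := by
  set A := θ * b * Real.exp (θ * K * s₀) / w t ^ θ
  have hg : ∀ s ∈ Icc s₀ t,
      HasDerivAt (fun y => A * (y ^ (p - 1) / (p - 1))) (A * s ^ (p - 2)) s := by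
    intro s hs
    have hd := Real.hasDerivAt_rpow_const (p := p - 1) (Or.inl (hs₀.trans_le hs.1).ne')
    refine ((hd.div_const (p - 1)).const_mul A).congr_deriv ?_
    rw [show p - 1 - 1 = p - 2 by ring, mul_div_cancel_left₀ _ (sub_ne_zero.2 hp)]
  have key := sub_le_sub_of_hasDerivAt_le hs₀t
    (fun s hs => (hu' s hs).exp_mul_rpow_neg (c := θ * K) (θ := θ) (hu_pos s hs)) hg
    (fun s hs => davies_deriv_lower_bound hb hθ hK hs.1.le (hs₀.trans hs.1)
      (hw_pos s (Ioo_subset_Icc_self hs)) (hw_mono s (Ioo_subset_Icc_self hs))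
      (hu_pos s (Ioo_subset_Icc_self hs)) (hode s (Ioo_subset_Icc_self hs)))
  convert key using 1
  simp only [A]
  field_simp

lemma davies_rpow_le (hb : 0 < b) (hp : 1 < p) (hθ : 0 < θ) (hK : 0 ≤ K) {x : ℝ}
    (hx₀ : 0 < x) (hx₁ : x < 1) (hpx : (p - 1) * x ≤ 1) (ht : 0 < t)
    (hw_pos : ∀ s, 0 < s → 0 < w s) (hw_mono : ∀ r s, 0 < r → r ≤ s → w r ≤ w s)
    (hu_pos : ∀ s, 0 < s → 0 < u s) (hu' : ∀ s, 0 < s → HasDerivAt u (u' s) s)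
    (hode : ∀ s, 0 < s → u' s ≤ -b * s ^ (p - 2) * u s ^ (1 + θ) / w s ^ θ + K * u s) :
    u t ^ θ ≤
      2 * x⁻¹ / (θ * b) * t ^ (-(p - 1)) * Real.exp (θ * (K * x * t)) * w t ^ θ := by
  set s₀ := (1 - x) * t
  have hs₀ : 0 < s₀ := mul_pos (by linarith) ht
  have hs₀t : s₀ ≤ t := by nlinarith
  have hpos : ∀ s ∈ Icc s₀ t, 0 < s := fun s hs => hs₀.trans_le hs.1
  have hincr := davies_window_increment hb.le hp.ne' hθ.le hK hs₀ hs₀t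
    (fun s hs => hw_pos s (hpos s hs)) (fun s hs => hw_mono s t (hpos s hs) hs.2)
    (fun s hs => hu_pos s (hpos s hs)) (fun s hs => hu' s (hpos s hs))
    (fun s hs => hode s (hpos s hs))
  have hgap : t ^ (p - 1) * ((p - 1) * x / 2) ≤ t ^ (p - 1) - s₀ ^ (p - 1) := by
    have := one_sub_rpow_le_one_sub_half_mul (by linarith) hx₀.le hx₁ hpx
    rw [Real.mul_rpow (by linarith) ht.le]
    nlinarith [Real.rpow_pos_of_pos ht (p - 1)]
  have hwt := hw_pos t ht
  have hut := hu_pos t ht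
  have hlow : θ * b * Real.exp (θ * K * s₀) * t ^ (p - 1) * x / (2 * w t ^ θ) ≤
      Real.exp (θ * K * t) / u t ^ θ := by
    have hv₀ : 0 < Real.exp (θ * K * s₀) * u s₀ ^ (-θ) := by
      have := hu_pos s₀ hs₀; positivity
    rw [div_eq_mul_inv _ (u t ^ θ), ← Real.rpow_neg hut.le]
    calc θ * b * Real.exp (θ * K * s₀) * t ^ (p - 1) * x / (2 * w t ^ θ)
        = θ * b * Real.exp (θ * K * s₀) * (t ^ (p - 1) * ((p - 1) * x / 2))
          / ((p - 1) * w t ^ θ) := by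
          have : p - 1 ≠ 0 := by linarith
          field_simp
      _ ≤ θ * b * Real.exp (θ * K * s₀) * (t ^ (p - 1) - s₀ ^ (p - 1))
          / ((p - 1) * w t ^ θ) := by gcongr
      _ ≤ Real.exp (θ * K * t) * u t ^ (-θ) := by linarith
  rw [le_div_iff₀ (by positivity), mul_comm, ← le_div_iff₀ (by positivity)] at hlow
  refine hlow.trans_eq ?_
  have hexp : Real.exp (θ * K * t) = Real.exp (θ * K * s₀) * Real.exp (θ * (K * x * t)) := by
    rw [← Real.exp_add]; simp only [s₀]; ring_nf
  rw [hexp, Real.rpow_neg ht.le]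
  field_simp

lemma mul_rpow_mul_exp_mul_rpow_one_div {A T W θ r y : ℝ} (hA : 0 ≤ A) (hT : 0 ≤ T)
    (hW : 0 ≤ W) (hθ : θ ≠ 0) :
    (A * T ^ r * Real.exp (θ * y) * W ^ θ) ^ (1 / θ) =
      A ^ (1 / θ) * T ^ (r / θ) * Real.exp y * W := by
  have hroot : ∀ {z : ℝ}, 0 ≤ z → (z ^ θ) ^ (1 / θ) = z := fun hz => by
    rw [← Real.rpow_mul hz, mul_one_div_cancel hθ, Real.rpow_one]
  rw [Real.mul_rpow (by positivity) (by positivity), Real.mul_rpow (by positivity) (by positivity),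
    Real.mul_rpow hA (by positivity), ← Real.rpow_mul hT, mul_one_div, hroot hW,
    mul_comm θ y, Real.exp_mul, hroot (Real.exp_pos y).le]

end Davies

/-- Davies iteration lemma: if `w` is positive non-decreasing on `(0,∞)`, `u` is a
positive `C¹` function on `[0,∞)` satisfying
`u'(t) ≤ -b t^(p-2) u(t)^(1+θ)/w(t)^θ + K u(t)` for all `t ≥ 0`, then for every
`a ≥ 1` and `t > 0`,
`u(t) ≤ (2 p^a/(θ b))^(1/θ) t^(-(p-1)/θ) e^(K p^(-a) t) w(t)`. -/
theorem stmt_7 (w u : ℝ → ℝ) (b p θ K : ℝ)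
    (hb : 0 < b) (hp : 1 < p) (hθ : 0 < θ) (hK : 0 < K)
    (hw_pos : ∀ t, 0 < t → 0 < w t)
    (hw_mono : ∀ s t, 0 < s → s ≤ t → w s ≤ w t)
    (hu_pos : ∀ t, 0 ≤ t → 0 < u t)
    (hu_diff : ContDiffOn ℝ 1 u (Set.Ici (0 : ℝ)))
    (hode : ∀ t, 0 ≤ t →
      derivWithin u (Set.Ici (0 : ℝ)) t ≤
        -b * t ^ (p - 2) * u t ^ (1 + θ) / w t ^ θ + K * u t) :
    ∀ a : ℝ, 1 ≤ a → ∀ t, 0 < t →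
      u t ≤ (2 * p ^ a / (θ * b)) ^ (1 / θ) * t ^ (-(p - 1) / θ) *
        Real.exp (K * p ^ (-a) * t) * w t := by
  intro a ha t ht
  have hp₀ : 0 < p := by linarith
  have hx₀ : 0 < p ^ (-a) := Real.rpow_pos_of_pos hp₀ _
  have hxp : p ^ (-a) ≤ p⁻¹ := by
    rw [← Real.rpow_neg_one]
    exact Real.rpow_le_rpow_of_exponent_le hp.le (by linarith)
  have hx₁ : p ^ (-a) < 1 := hxp.trans_lt (inv_lt_one_of_one_lt₀ hp)
  have hpx : (p - 1) * p ^ (-a) ≤ 1 := by nlinarith [mul_inv_cancel₀ hp₀.ne']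
  have hu' : ∀ s, 0 < s → HasDerivAt u (derivWithin u (Ici 0) s) s := fun s hs => by
    rw [derivWithin_of_mem_nhds (Ici_mem_nhds hs)]
    exact ((hu_diff.differentiableOn one_ne_zero s hs.le).differentiableAt
      (Ici_mem_nhds hs)).hasDerivAt
  have hbound := davies_rpow_le hb hp hθ hK.le hx₀ hx₁ hpx ht hw_pos hw_mono
    (fun s hs => hu_pos s hs.le) hu' (fun s hs => hode s hs.le)
  have hinv : (p ^ (-a))⁻¹ = p ^ a := by rw [Real.rpow_neg hp₀.le, inv_inv]
  rw [hinv] at hbound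
  have hwt := hw_pos t ht
  rw [← mul_rpow_mul_exp_mul_rpow_one_div (by positivity) ht.le hwt.le hθ.ne', one_div,
    Real.le_rpow_inv_iff_of_pos (hu_pos t ht.le).le (by positivity) hθ]
  exact hbound
end
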